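/- arXiv:2311.14022 — 2 statements merged into one kernel-verified Lean document; each statement's English description precedes it below -/
import Mathlib

section
/- Let G be a finitely generated group in which every maximal subgroup is normal. Then d(G) = d(G/G'), i.e., the minimal cardinality of a generating set of G equals the minimal cardinality of a generating set of the abelianization G/G'. -/
/-!
Every maximal subgroup of `G` is normal, so its quotient has no nontrivial proper subgroups, is
cyclic, and hence contains `G'`. Thus `G'` lies in the Frattini subgroup. A finitely generated
group has enough maximal subgroups for the Frattini subgroup to consist of non-generators, so any
lift to `G` of a generating set of `G/G'` generates `G`.
-/

open Subgroup

section

variable {G H : Type*} [Group G] [Group H]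

theorem Subgroup.isCompactElement_closure_singleton (g : G) :
    IsCompactElement (closure {g}) := by
  rw [CompleteLattice.isCompactElement_iff_le_of_directed_sSup_le]
  intro s hne hdir hle
  obtain ⟨K, hK, hgK⟩ :=
    (mem_sSup_of_directedOn hne hdir).mp (hle (mem_closure_singleton_self g))
  exact ⟨K, hK, (closure_le K).mpr (Set.singleton_subset_iff.mpr hgK)⟩

theorem Subgroup.isCompactElement_closure_finset (S : Finset G) :
    IsCompactElement (closure (S : Set G)) := by
  have hS : closure (S : Set G) = S.sup fun g => closure {g} := by
    rw [Finset.sup_eq_iSup, ← Set.biUnion_of_singleton (S : Set G), closure_iUnion]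
    simp only [closure_iUnion, Finset.mem_coe]
  rw [hS]
  exact CompleteLattice.isCompactElement_finsetSup S fun g _ => isCompactElement_closure_singleton g

instance Group.FG.isCoatomic_subgroup [h : Group.FG G] : IsCoatomic (Subgroup G) := by
  obtain ⟨S, hS⟩ := h.out
  exact CompleteLattice.coatomic_of_top_compact (hS ▸ isCompactElement_closure_finset S)

theorem isCyclic_of_isSimpleOrder_subgroup [IsSimpleOrder (Subgroup G)] : IsCyclic G := by
  have : Nontrivial G := Subgroup.nontrivial_iff.mp inferInstance
  obtain ⟨g, hg⟩ := exists_ne (1 : G)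
  exact isCyclic_iff_exists_zpowers_eq_top.mpr
    ⟨g, (IsSimpleOrder.eq_bot_or_eq_top _).resolve_left (zpowers_ne_bot.mpr hg)⟩

theorem Subgroup.commutator_le_of_isCoatom {M : Subgroup G} [M.Normal] (hM : IsCoatom M) :
    _root_.commutator G ≤ M := by
  let e : Subgroup (G ⧸ M) ≃o Set.Ici M := QuotientGroup.comapMk'OrderIso M
  have : IsSimpleOrder (Subgroup (G ⧸ M)) :=
    e.isSimpleOrder_iff.mpr (Set.isSimpleOrder_Ici_iff_isCoatom.mpr hM)
  have : IsCyclic (G ⧸ M) := isCyclic_of_isSimpleOrder_subgroup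
  exact Normal.quotient_commutative_iff_commutator_le.mp inferInstance

theorem commutator_le_frattini (hMN : ∀ M : Subgroup G, IsCoatom M → M.Normal) :
    _root_.commutator G ≤ frattini G :=
  le_iInf₂ fun M hM => have := hMN M hM; commutator_le_of_isCoatom hM

theorem Group.rank_eq_sInf [FG G] :
    rank G = sInf {n | ∃ S : Finset G, S.card = n ∧ closure (S : Set G) = ⊤} :=
  le_antisymm (le_csInf ⟨_, rank_spec G⟩ fun _ ⟨_, hS, h⟩ => hS ▸ rank_le h)
    (Nat.sInf_le (rank_spec G))

theorem Subgroup.closure_eq_top_of_closure_image_eq_top [IsCoatomic (Subgroup G)] {f : G →* H}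
    (hker : f.ker ≤ frattini G) {s : Set G} (hs : closure (f '' s) = ⊤) : closure s = ⊤ := by
  apply frattini_nongenerating
  rw [eq_top_iff, ← comap_top f, ← hs, ← MonoidHom.map_closure, comap_map_eq]
  exact sup_le_sup_left hker _

theorem Group.rank_eq_of_surjective_of_ker_le_frattini [FG G] [FG H] (f : G →* H)
    (hf : Function.Surjective f) (hker : f.ker ≤ frattini G) : rank G = rank H := by
  classical
  refine le_antisymm ?_ (rank_le_of_surjective f hf)
  obtain ⟨T, hTcard, hT⟩ := rank_spec H
  set S := T.image (Function.surjInv hf)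
  have hfS : f '' S = T := by simp [S, Set.image_image, Function.surjInv_eq hf]
  calc rank G ≤ S.card := rank_le (closure_eq_top_of_closure_image_eq_top hker (hfS ▸ hT))
    _ ≤ T.card := Finset.card_image_le
    _ = rank H := hTcard

end

theorem rank_eq_rank_abelianization
    {G : Type*} [Group G] [Group.FG G]
    (hMN : ∀ M : Subgroup G, IsCoatom M → M.Normal) :
    sInf {n : ℕ | ∃ S : Finset G, S.card = n ∧ Subgroup.closure (S : Set G) = ⊤} =
      sInf {n : ℕ | ∃ S : Finset (Abelianization G),
        S.card = n ∧ Subgroup.closure (S : Set (Abelianization G)) = ⊤} := by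
  have hof : Function.Surjective (Abelianization.of (G := G)) := QuotientGroup.mk'_surjective _
  have : Group.FG (Abelianization G) := Group.fg_of_surjective hof
  rw [← Group.rank_eq_sInf, ← Group.rank_eq_sInf]
  exact Group.rank_eq_of_surjective_of_ker_le_frattini _ hof
    (Abelianization.ker_of G ▸ commutator_le_frattini hMN)
end

section
/- Let G be a group in which every maximal subgroup is normal, with d(G) = 2, and suppose G/G' is isomorphic to C_p × C_p for some prime p. Then the total domination number of Δ(G) equals 2: there exists a total dominating set for Δ(G) of size 2, and no total dominating set of size 1 exists. -/
/-- The generating graph of a group `G`: vertices are group elements, with distinct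
nontrivial `x, y` adjacent iff they generate `G` (the identity is isolated). -/
def genGraph (G : Type*) [Group G] : SimpleGraph G where
  Adj x y := x ≠ y ∧ x ≠ 1 ∧ y ≠ 1 ∧ Subgroup.closure ({x, y} : Set G) = ⊤
  symm := ⟨by
    rintro x y ⟨hxy, hx, hy, h⟩
    exact ⟨hxy.symm, hy, hx, by rwa [Set.pair_comm]⟩⟩
  loopless := ⟨fun x h => h.1 rfl⟩

/-- The set of non-isolated vertices of the generating graph. -/
def nonIso (G : Type*) [Group G] : Set G := {v | ∃ w, (genGraph G).Adj v w}

/-- `Δ(G)`: the induced subgraph of the generating graph on its non-isolated vertices. -/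
def deltaGraph (G : Type*) [Group G] : SimpleGraph (nonIso G) :=
  (genGraph G).induce (nonIso G)

/-- A set `S` of vertices of `Δ(G)` is a total dominating set if every vertex of
`Δ(G)` is adjacent to some vertex in `S`. -/
def IsTotalDominating (G : Type*) [Group G] (S : Set (nonIso G)) : Prop :=
  ∀ v : nonIso G, ∃ w ∈ S, (deltaGraph G).Adj v w

section Aux

open scoped commutatorElement

/-- If two vectors in `(ZMod p)²` have nonzero determinant, they span. -/
lemma aux_span_pair {p : ℕ} [Fact p.Prime] {u v : ZMod p × ZMod p}
    (h : u.1 * v.2 - u.2 * v.1 ≠ 0) :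
    Submodule.span (ZMod p) ({u, v} : Set (ZMod p × ZMod p)) = ⊤ := by
  rw [Submodule.eq_top_iff']
  intro x
  rw [Submodule.mem_span_pair]
  refine ⟨(x.1 * v.2 - x.2 * v.1) / (u.1 * v.2 - u.2 * v.1),
    (u.1 * x.2 - u.2 * x.1) / (u.1 * v.2 - u.2 * v.1), ?_⟩
  have : ∀ a b : ZMod p, ∀ w : ZMod p × ZMod p, a • w + b • v = (a * w.1 + b * v.1, a * w.2 + b * v.2) := by
    intro a b w; rfl
  rw [this]
  apply Prod.ext <;> dsimp only <;> rw [div_mul_eq_mul_div, div_mul_eq_mul_div, ← add_div, div_eq_iff h] <;> ring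

lemma aux_span_single {p : ℕ} [Fact p.Prime] (c : ZMod p × ZMod p) :
    Submodule.span (ZMod p) ({0, c} : Set (ZMod p × ZMod p)) ≠ ⊤ := by
  intro h
  by_cases hc : c.1 = 0
  · have h1 : ((1 : ZMod p), (0 : ZMod p)) ∈ Submodule.span (ZMod p) ({0, c} : Set (ZMod p × ZMod p)) := by
      rw [h]; trivial
    obtain ⟨r, s, hrs⟩ := Submodule.mem_span_pair.mp h1
    have := congrArg Prod.fst hrs
    simp [hc] at this
  · have h1 : ((0 : ZMod p), (1 : ZMod p)) ∈ Submodule.span (ZMod p) ({0, c} : Set (ZMod p × ZMod p)) := by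
      rw [h]; trivial
    obtain ⟨r, s, hrs⟩ := Submodule.mem_span_pair.mp h1
    have h2 := congrArg Prod.fst hrs
    have h3 := congrArg Prod.snd hrs
    simp at h2 h3
    rcases h2 with rfl | h4
    · simp at h3
    · exact hc h4

/-- Bridge between multiplicative subgroup generation and span. -/
lemma aux_bridge {p : ℕ} [Fact p.Prime] (u w : Multiplicative (ZMod p × ZMod p)) :
    Subgroup.closure ({u, w} : Set (Multiplicative (ZMod p × ZMod p))) = ⊤ ↔
      Submodule.span (ZMod p) ({u.toAdd, w.toAdd} : Set (ZMod p × ZMod p)) = ⊤ := by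
  rw [Subgroup.eq_top_iff', Submodule.eq_top_iff']
  constructor
  · intro h c
    obtain ⟨m, n, hmn⟩ := Subgroup.mem_closure_pair.mp (h (Multiplicative.ofAdd c))
    rw [Submodule.mem_span_pair]
    refine ⟨(m : ZMod p), (n : ZMod p), ?_⟩
    rw [Int.cast_smul_eq_zsmul, Int.cast_smul_eq_zsmul]
    have := congrArg Multiplicative.toAdd hmn
    rwa [toAdd_mul, toAdd_zpow, toAdd_zpow] at this
  · intro h z
    obtain ⟨r, s, hrs⟩ := Submodule.mem_span_pair.mp (h z.toAdd)
    obtain ⟨m, hm⟩ := ZMod.intCast_surjective r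
    obtain ⟨n, hn⟩ := ZMod.intCast_surjective s
    rw [Subgroup.mem_closure_pair]
    refine ⟨m, n, Multiplicative.toAdd.injective ?_⟩
    rw [toAdd_mul, toAdd_zpow, toAdd_zpow, ← Int.cast_smul_eq_zsmul (ZMod p),
      ← Int.cast_smul_eq_zsmul (ZMod p), hm, hn, hrs]

/-- A 2-generated group has a coatomic subgroup lattice. -/
lemma aux_coatomic {G : Type*} [Group G] {x y : G}
    (hxy : Subgroup.closure ({x, y} : Set G) = ⊤) : IsCoatomic (Subgroup G) := by
  apply IsCoatomic.of_isChain_bounded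
  intro c hc hne htop
  refine ⟨sSup c, ?_, fun K hK => le_sSup hK⟩
  intro hT
  have hx : x ∈ sSup c := by rw [hT]; trivial
  have hy : y ∈ sSup c := by rw [hT]; trivial
  rw [Subgroup.mem_sSup_of_directedOn hne hc.directedOn] at hx hy
  obtain ⟨H1, h1c, hx1⟩ := hx
  obtain ⟨H2, h2c, hy2⟩ := hy
  rcases eq_or_ne H1 H2 with rfl | hne12
  · have : H1 = ⊤ := by
      rw [eq_top_iff, ← hxy, Subgroup.closure_le]
      rintro z hz
      rcases hz with rfl | hz
      · exact hx1
      · rcases hz with rfl; exact hy2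
    exact htop (this ▸ h1c)
  · rcases hc.total h1c h2c with h | h
    · have : H2 = ⊤ := by
        rw [eq_top_iff, ← hxy, Subgroup.closure_le]
        rintro z hz
        rcases hz with rfl | hz
        · exact h hx1
        · rcases hz with rfl; exact hy2
      exact htop (this ▸ h2c)
    · have : H1 = ⊤ := by
        rw [eq_top_iff, ← hxy, Subgroup.closure_le]
        rintro z hz
        rcases hz with rfl | hz
        · exact hx1
        · rcases hz with rfl; exact h hy2
      exact htop (this ▸ h1c)

/-- The commutator subgroup is contained in any normal maximal subgroup. -/
lemma aux_commutator_le {G : Type*} [Group G] {M : Subgroup G} (hM : IsCoatom M)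
    [M.Normal] : commutator G ≤ M := by
  have hcomm : ∀ a b : G ⧸ M, a * b = b * a := by
    intro a b
    rcases eq_or_ne a 1 with rfl | ha
    · simp
    · have hlt : M < (Subgroup.zpowers a).comap (QuotientGroup.mk' M) := by
        refine lt_of_le_of_ne (fun m hm => ?_) (fun heq => ?_)
        · have : QuotientGroup.mk' M m = 1 := (QuotientGroup.eq_one_iff m).mpr hm
          simp only [Subgroup.mem_comap, this]
          exact one_mem _
        · obtain ⟨g, hg⟩ := QuotientGroup.mk'_surjective M a
          have hgmem : g ∈ (Subgroup.zpowers a).comap (QuotientGroup.mk' M) := by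
            simp [Subgroup.mem_comap, hg, Subgroup.mem_zpowers]
          rw [← heq] at hgmem
          exact ha (by rw [← hg]; exact (QuotientGroup.eq_one_iff g).mpr hgmem)
      have htop := hM.2 _ hlt
      obtain ⟨g', hg'⟩ := QuotientGroup.mk'_surjective M b
      have : g' ∈ (Subgroup.zpowers a).comap (QuotientGroup.mk' M) := by rw [htop]; trivial
      rw [Subgroup.mem_comap, hg'] at this
      obtain ⟨n, hn⟩ := this
      rw [← hn]
      show a * a ^ n = a ^ n * a
      exact ((Commute.refl a).zpow_right n).eq
  rw [commutator_eq_closure, Subgroup.closure_le]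
  rintro z ⟨g, h, rfl⟩
  have : QuotientGroup.mk' M ⁅g, h⁆ = 1 := by
    rw [map_commutatorElement]
    exact commutatorElement_eq_one_iff_mul_comm.mpr (hcomm _ _)
  exact (QuotientGroup.eq_one_iff _).mp this

end Aux

theorem total_domination_number_eq_two
    {G : Type*} [Group G]
    (hMN : ∀ M : Subgroup G, IsCoatom M → M.Normal)
    (h2 : ∃ x y : G, Subgroup.closure ({x, y} : Set G) = ⊤)
    (hnc : ¬ ∃ x : G, Subgroup.closure ({x} : Set G) = ⊤)
    (p : ℕ) (hp : p.Prime)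
    (hab : Nonempty (Abelianization G ≃* Multiplicative (ZMod p × ZMod p))) :
    (∃ S : Set (nonIso G), S.ncard = 2 ∧ IsTotalDominating G S) ∧
      ¬ ∃ S : Set (nonIso G), S.ncard = 1 ∧ IsTotalDominating G S := by
  haveI : Fact p.Prime := ⟨hp⟩
  obtain ⟨e⟩ := hab
  obtain ⟨g1, g2, hg12⟩ := h2
  haveI hcoat : IsCoatomic (Subgroup G) := aux_coatomic hg12
  set φ : G →* Multiplicative (ZMod p × ZMod p) := e.toMonoidHom.comp Abelianization.of with hφ
  have hφsurj : Function.Surjective φ := e.surjective.comp (fun b =>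
    QuotientGroup.mk'_surjective (commutator G) b)
  have hkerφ : ∀ g : G, φ g = 1 → g ∈ commutator G := by
    intro g hg
    have : Abelianization.of g = 1 := e.injective (by rw [map_one]; exact hg)
    exact (QuotientGroup.eq_one_iff g).mp this
  set f : G → ZMod p × ZMod p := fun g => (φ g).toAdd with hf
  have f_one : f (1 : G) = 0 := by simp [hf]
  -- forward direction
  have fwd : ∀ a b : G, Subgroup.closure ({a, b} : Set G) = ⊤ →
      Subgroup.closure ({φ a, φ b} : Set (Multiplicative (ZMod p × ZMod p))) = ⊤ := by
    intro a b h
    have hmap := congrArg (Subgroup.map φ) h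
    rw [MonoidHom.map_closure, Set.image_pair] at hmap
    rw [hmap, ← MonoidHom.range_eq_map]
    exact MonoidHom.range_eq_top.mpr hφsurj
  -- backward direction
  have bwd : ∀ a b : G,
      Subgroup.closure ({φ a, φ b} : Set (Multiplicative (ZMod p × ZMod p))) = ⊤ →
      Subgroup.closure ({a, b} : Set G) = ⊤ := by
    intro a b h
    by_contra hne
    obtain ⟨M, hM, hle⟩ :=
      (hcoat.eq_top_or_exists_le_coatom (Subgroup.closure ({a, b} : Set G))).resolve_left hne
    haveI := hMN M hM
    have hcomm := aux_commutator_le hM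
    have hker : φ.ker ≤ M := fun g hg => hcomm (hkerφ g hg)
    have ha : a ∈ M := hle (Subgroup.subset_closure (by simp))
    have hb : b ∈ M := hle (Subgroup.subset_closure (by simp))
    have hsub : Subgroup.closure ({φ a, φ b} : Set (Multiplicative (ZMod p × ZMod p))) ≤
        M.map φ := by
      rw [Subgroup.closure_le]
      rintro z hz
      rcases hz with rfl | hz
      · exact ⟨a, ha, rfl⟩
      · rcases hz with rfl; exact ⟨b, hb, rfl⟩
    rw [h, top_le_iff] at hsub
    have hMT : M = ⊤ := by
      have h3 := Subgroup.comap_map_eq (f := φ) M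
      rw [hsub, Subgroup.comap_top, sup_eq_left.mpr hker] at h3
      exact h3.symm
    exact hM.1 hMT
  have key : ∀ a b : G, Subgroup.closure ({a, b} : Set G) = ⊤ ↔
      Submodule.span (ZMod p) ({f a, f b} : Set (ZMod p × ZMod p)) = ⊤ :=
    fun a b => ⟨fun h => (aux_bridge (φ a) (φ b)).mp (fwd a b h),
      fun h => bwd a b ((aux_bridge (φ a) (φ b)).mpr h)⟩
  -- choose the two vertices
  obtain ⟨x0, hx0⟩ := hφsurj (Multiplicative.ofAdd ((1 : ZMod p), (0 : ZMod p)))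
  obtain ⟨y0, hy0⟩ := hφsurj (Multiplicative.ofAdd ((0 : ZMod p), (1 : ZMod p)))
  have hfx0 : f x0 = ((1 : ZMod p), (0 : ZMod p)) := by rw [hf]; simp [hx0]
  have hfy0 : f y0 = ((0 : ZMod p), (1 : ZMod p)) := by rw [hf]; simp [hy0]
  have hne1 : ∀ g : G, f g ≠ 0 → g ≠ 1 := fun g h hg => h (by rw [hg]; exact f_one)
  have hx0ne1 : x0 ≠ 1 := hne1 x0 (by rw [hfx0]; intro h; exact one_ne_zero (congrArg Prod.fst h))
  have hy0ne1 : y0 ≠ 1 := hne1 y0 (by rw [hfy0]; intro h; exact one_ne_zero (congrArg Prod.snd h))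
  have hx0y0ne : x0 ≠ y0 := by
    intro h
    have : ((1 : ZMod p), (0 : ZMod p)) = ((0 : ZMod p), (1 : ZMod p)) := by
      rw [← hfx0, h, hfy0]
    exact one_ne_zero (congrArg Prod.fst this)
  have hgen : Subgroup.closure ({x0, y0} : Set G) = ⊤ := by
    rw [key, hfx0, hfy0]
    apply aux_span_pair
    simp
  have hadj : (genGraph G).Adj x0 y0 := ⟨hx0y0ne, hx0ne1, hy0ne1, hgen⟩
  have hx0mem : x0 ∈ nonIso G := ⟨y0, hadj⟩
  have hy0mem : y0 ∈ nonIso G := ⟨x0, (genGraph G).adj_symm hadj⟩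
  constructor
  · refine ⟨{⟨x0, hx0mem⟩, ⟨y0, hy0mem⟩}, ?_, ?_⟩
    · exact Set.ncard_pair (fun h => hx0y0ne (congrArg Subtype.val h))
    · intro v
      obtain ⟨w, hw⟩ := v.2
      have hsp : Submodule.span (ZMod p) ({f v.1, f w} : Set (ZMod p × ZMod p)) = ⊤ :=
        (key _ _).mp hw.2.2.2
      have hfv : f v.1 ≠ 0 := by
        intro h0
        rw [h0] at hsp
        exact aux_span_single (f w) hsp
      by_cases ha1 : (f v.1).1 = 0
      · -- dominate by x0
        have ha2 : (f v.1).2 ≠ 0 := by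
          intro h2
          exact hfv (Prod.ext ha1 h2)
        refine ⟨⟨x0, hx0mem⟩, by simp, ?_, ?_, ?_, ?_⟩
        · intro h
          have : f v.1 = f x0 := congrArg f h
          rw [hfx0] at this
          exact one_ne_zero (ha1 ▸ (congrArg Prod.fst this)).symm
        · exact hne1 _ hfv
        · exact hx0ne1
        · show Subgroup.closure ({(v : G), x0} : Set G) = ⊤
          rw [key, hfx0]
          apply aux_span_pair
          simpa [ha1] using ha2
      · -- dominate by y0
        refine ⟨⟨y0, hy0mem⟩, by simp, ?_, ?_, ?_, ?_⟩
        · intro h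
          have : f v.1 = f y0 := congrArg f h
          rw [hfy0] at this
          exact ha1 (congrArg Prod.fst this)
        · exact hne1 _ hfv
        · exact hy0ne1
        · show Subgroup.closure ({(v : G), y0} : Set G) = ⊤
          rw [key, hfy0]
          apply aux_span_pair
          simpa using ha1
  · rintro ⟨S, hS, hdom⟩
    obtain ⟨w, rfl⟩ := Set.ncard_eq_one.mp hS
    obtain ⟨w', hw', hadj'⟩ := hdom w
    rw [Set.mem_singleton_iff] at hw'
    subst hw'
    exact (deltaGraph G).irrefl hadj'
end
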